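/- Let G be a finitely generated group with a central subgroup ⟨σ⟩ ≅ ℤ. If G admits a surjection ρ onto a finitely generated nilpotent group N with ρ(σ) of infinite order, then for every d ≥ 1 the quotient G/⟨σ^d⟩ admits a finite quotient F_d in which the image of σ has order exactly d. -/

import Mathlib

/-!
The image of `ρ σ` is central of infinite order in `N`, so in `N ⧸ ⟨ρ σ ^ d⟩` it has order exactly
`d`. Finitely generated nilpotent groups are residually finite, so some finite quotient of
`N ⧸ ⟨ρ σ ^ d⟩` still sees this order, and composing with `ρ` gives `F_d`.

Residual finiteness: for `g ≠ 1` take (Zorn) a normal subgroup `M` maximal with `g ∉ M`. Every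
nontrivial normal subgroup of `G ⧸ M` contains `g`, which forces the center of `G ⧸ M` to be
torsion: a central `z` of infinite order would put `g` in `⟨z⟩`, hence make `g` central of infinite
order, and then `g ∈ ⟨g ^ 2⟩`. A finitely generated nilpotent group with torsion center is finite,
by induction along `G ⧸ center G`: if `x` is central modulo the center, then
`⁅x ^ t, s⁆ = ⁅x, s⁆ ^ t`, so a suitable power of `x` commutes with all generators `s`.
-/

open Subgroup
open scoped IsMulCommutative commutatorElement

section

variable {G : Type*} [Group G]

theorem Subgroup.normal_zpowers_of_mem_center {g : G} (hg : g ∈ center G) :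
    (zpowers g).Normal :=
  ⟨fun n hn h => by
    rwa [mem_center_iff.mp (zpowers_le.mpr hg hn) h, mul_inv_cancel_right]⟩

theorem orderOf_mk_zpowers_pow {x : G} (hx : ¬IsOfFinOrder x) (d : ℕ)
    [(zpowers (x ^ d)).Normal] : orderOf (x : G ⧸ zpowers (x ^ d)) = d := by
  have pow_eq_one_iff : ∀ m : ℕ, (x : G ⧸ zpowers (x ^ d)) ^ m = 1 ↔ d ∣ m := by
    intro m
    rw [← QuotientGroup.mk_pow, QuotientGroup.eq_one_iff, mem_zpowers_iff]
    constructor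
    · rintro ⟨k, hk⟩
      have : (d : ℤ) * k = m :=
        injective_zpow_iff_not_isOfFinOrder.mpr hx (by simpa [zpow_mul] using hk)
      exact Int.natCast_dvd_natCast.mp ⟨k, this.symm⟩
    · rintro ⟨k, rfl⟩
      exact ⟨k, by simp [pow_mul]⟩
  exact Nat.dvd_antisymm (orderOf_dvd_of_pow_eq_one ((pow_eq_one_iff d).mpr dvd_rfl))
    ((pow_eq_one_iff _).mp (pow_orderOf_eq_one _))

theorem commutatorElement_pow_left_of_commute {x g : G} (h : Commute x ⁅x, g⁆) (n : ℕ) :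
    ⁅x ^ n, g⁆ = ⁅x, g⁆ ^ n := by
  induction n with
  | zero => simp
  | succ n ih =>
    calc ⁅x ^ (n + 1), g⁆ = x * ⁅x ^ n, g⁆ * x⁻¹ * ⁅x, g⁆ := by
          simp only [commutatorElement_def]; group
      _ = ⁅x, g⁆ ^ (n + 1) := by rw [ih, (h.pow_right n).eq, mul_inv_cancel_right, pow_succ]

theorem isOfFinOrder_of_mk_mem_center [Group.FG G] (hZ : IsMulTorsion (center G)) {x : G}
    (hx : (x : G ⧸ center G) ∈ center (G ⧸ center G)) : IsOfFinOrder x := by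
  have hcomm : ∀ g : G, ⁅x, g⁆ ∈ center G := fun g => by
    have : QuotientGroup.mk' (center G) ⁅x, g⁆ = 1 := by
      rw [map_commutatorElement, commutatorElement_eq_one_iff_commute]
      exact (mem_center_iff.mp hx _).symm
    rwa [← MonoidHom.mem_ker, QuotientGroup.ker_mk'] at this
  have hfin : ∀ g : G, IsOfFinOrder ⁅x, g⁆ := fun g =>
    Submonoid.isOfFinOrder_coe.mpr (hZ ⟨_, hcomm g⟩)
  obtain ⟨S, hS⟩ := Group.FG.out (G := G)
  let t := ∏ s ∈ S, orderOf ⁅x, s⁆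
  have ht : 0 < t := Finset.prod_pos fun s _ => (hfin s).orderOf_pos
  have hxt : x ^ t ∈ center G := by
    have : closure (S : Set G) ≤ centralizer {x ^ t} := (closure_le _).mpr fun s hs => by
      rw [SetLike.mem_coe, mem_centralizer_singleton_iff, eq_comm, ← commute_iff_eq,
        ← commutatorElement_eq_one_iff_commute,
        commutatorElement_pow_left_of_commute (mem_center_iff.mp (hcomm s) x),
        ← orderOf_dvd_iff_pow_eq_one]
      exact Finset.dvd_prod_of_mem _ hs
    rw [hS] at this
    exact mem_center_iff.mpr fun g => mem_centralizer_singleton_iff.mp (this (mem_top g))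
  exact (isOfFinOrder_pow.mp (Submonoid.isOfFinOrder_coe.mpr (hZ ⟨_, hxt⟩))).resolve_right ht.ne'

theorem Group.finite_of_isMulTorsion_center [Group.IsNilpotent G] [Group.FG G]
    (hZ : IsMulTorsion (center G)) : Finite G := by
  revert hZ
  refine nilpotent_center_quotient_ind
    (P := fun G _ _ => ∀ [Group.FG G], IsMulTorsion (center G) → Finite G) G ?_ ?_
  · intro G _ _ _ _
    infer_instance
  · intro G _ _ ih _ hZ
    have hZQ : IsMulTorsion (center (G ⧸ center G)) := fun ⟨q, hq⟩ => by
      obtain ⟨x, rfl⟩ := QuotientGroup.mk_surjective q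
      exact Submonoid.isOfFinOrder_coe.mp
        ((QuotientGroup.mk' _).isOfFinOrder (isOfFinOrder_of_mk_mem_center hZ hq))
    have : Finite (G ⧸ center G) := ih hZQ
    have : (center G).FiniteIndex := finiteIndex_of_finite_quotient
    have : Finite (center G) := CommGroup.finite_of_fg_isMulTorsion _ hZ
    exact Finite.of_subgroup_quotient (center G)

theorem isMulTorsion_center_of_forall_normal_ne_bot {g : G} (hg : g ≠ 1)
    (hmin : ∀ K : Subgroup G, K.Normal → K ≠ ⊥ → g ∈ K) : IsMulTorsion (center G) := by
  rintro ⟨z, hz⟩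
  suffices IsOfFinOrder z from Submonoid.isOfFinOrder_coe.mp this
  by_contra hzinf
  have hgz : g ∈ zpowers z := hmin _ (normal_zpowers_of_mem_center hz) fun h =>
    hzinf (by rw [zpowers_eq_bot.mp h]; exact IsOfFinOrder.one)
  have hgc : g ∈ center G := zpowers_le.mpr hz hgz
  have hginf : ¬IsOfFinOrder g := by
    obtain ⟨k, rfl⟩ := mem_zpowers_iff.mp hgz
    intro hfin
    obtain ⟨n, hn, hzn⟩ := hfin.exists_pow_eq_one
    have : k * n = 0 :=
      injective_zpow_iff_not_isOfFinOrder.mpr hzinf (by simpa [zpow_mul] using hzn)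
    rcases mul_eq_zero.mp this with rfl | h
    · exact hg (zpow_zero z)
    · omega
  -- `g` would lie in `⟨g ^ 2⟩`, in which it has order `2`
  have : (zpowers (g ^ 2)).Normal := normal_zpowers_of_mem_center (pow_mem hgc 2)
  have hg2 : g ∈ zpowers (g ^ 2) := hmin _ this fun h =>
    hginf (isOfFinOrder_iff_pow_eq_one.mpr ⟨2, two_pos, zpowers_eq_bot.mp h⟩)
  have := orderOf_mk_zpowers_pow hginf 2
  rw [(QuotientGroup.eq_one_iff g).mpr hg2, orderOf_one] at this
  omega

theorem exists_maximal_normal_notMem {g : G} (hg : g ≠ 1) :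
    ∃ M : Subgroup G, Maximal (fun K => K.Normal ∧ g ∉ K) M := by
  obtain ⟨M, -, hM⟩ := zorn_le_nonempty₀ {K : Subgroup G | K.Normal ∧ g ∉ K}
    (fun c hc hchain K hK => by
      have hmem {x : G} : x ∈ sSup c ↔ ∃ K ∈ c, x ∈ K :=
        mem_sSup_of_directedOn ⟨K, hK⟩ hchain.directedOn
      refine ⟨sSup c, ⟨sSup_normal c fun K hK => (hc hK).1, fun hgc => ?_⟩,
        fun K hK => le_sSup hK⟩
      obtain ⟨K, hK, hgK⟩ := hmem.mp hgc
      exact (hc hK).2 hgK)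
    ⊥ ⟨normal_bot, by simpa using hg⟩
  exact ⟨M, hM⟩

theorem mk_mem_of_maximal_normal_notMem {g : G} {M : Subgroup G} [M.Normal]
    (hM : Maximal (fun K => K.Normal ∧ g ∉ K) M) {V : Subgroup (G ⧸ M)} (hV : V.Normal)
    (hV' : V ≠ ⊥) : (g : G ⧸ M) ∈ V := by
  by_contra hgV
  have hle : comap (QuotientGroup.mk' M) V ≤ M :=
    hM.2 ⟨hV.comap _, hgV⟩ (QuotientGroup.le_comap_mk' M V)
  refine hV' (eq_bot_iff.mpr fun v hv => ?_)
  obtain ⟨x, rfl⟩ := QuotientGroup.mk_surjective v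
  exact mem_bot.mpr ((QuotientGroup.eq_one_iff x).mpr (hle hv))

instance Group.IsNilpotent.residuallyFinite [Group.FG G] [Group.IsNilpotent G] :
    Group.ResiduallyFinite G := by
  refine Group.residuallyFinite_iff_exists_finiteIndex.mpr fun g hg => ?_
  obtain ⟨M, hM⟩ := exists_maximal_normal_notMem hg
  have : M.Normal := hM.prop.1
  have hgM : (g : G ⧸ M) ≠ 1 := by rw [Ne, QuotientGroup.eq_one_iff]; exact hM.prop.2
  have : Finite (G ⧸ M) := Group.finite_of_isMulTorsion_center
    (isMulTorsion_center_of_forall_normal_ne_bot hgM fun V hV hV' =>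
      mk_mem_of_maximal_normal_notMem hM hV hV')
  exact ⟨M, finiteIndex_of_finite_quotient, hM.prop.2⟩

theorem Group.exists_finiteIndexNormalSubgroup_orderOf_mk_eq [Group.ResiduallyFinite G] {g : G}
    (hg : IsOfFinOrder g) :
    ∃ H : FiniteIndexNormalSubgroup G, orderOf (g : G ⧸ H.toSubgroup) = orderOf g := by
  have hne : ∀ m : Set.Ico 1 (orderOf g), g ^ (m : ℕ) ≠ 1 := fun m =>
    pow_ne_one_of_lt_orderOf (Nat.one_le_iff_ne_zero.mp m.2.1) m.2.2
  choose H hH using fun m => Group.exists_finiteIndexNormalSubgroup_notMem _ (hne m)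
  have : (⨅ m, (H m).toSubgroup).Normal := normal_iInf_normal fun m => inferInstance
  have : (⨅ m, (H m).toSubgroup).FiniteIndex := finiteIndex_iInf fun m => inferInstance
  refine ⟨.ofSubgroup (⨅ m, (H m).toSubgroup), (orderOf_eq_iff hg.orderOf_pos).mpr ⟨?_, ?_⟩⟩
  · rw [← QuotientGroup.mk_pow, pow_orderOf_eq_one, QuotientGroup.mk_one]
  · intro m hm hm0 hgm
    rw [← QuotientGroup.mk_pow, QuotientGroup.eq_one_iff] at hgm
    exact hH ⟨m, hm0, hm⟩ (mem_iInf.mp hgm _)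

end

theorem exists_finite_quotient_with_order_d_general (G N : Type*) [Group G] [Group N]
    [Group.FG N] [Group.IsNilpotent N]
    (σ : G) (hσ : σ ∈ Subgroup.center G)
    (ρ : G →* N) (hρ : Function.Surjective ρ) (hρσ : ¬ IsOfFinOrder (ρ σ)) :
    ∀ d : ℕ, 1 ≤ d → ∃ (F : Type) (_ : Group F) (_ : Finite F) (q : G →* F),
      Function.Surjective q ∧ q (σ ^ d) = 1 ∧ orderOf (q σ) = d := by
  intro d hd
  have hρσc : ρ σ ∈ center N := by
    refine mem_center_iff.mpr fun n => ?_
    obtain ⟨g, rfl⟩ := hρ n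
    rw [← map_mul, ← map_mul, mem_center_iff.mp hσ g]
  have : (zpowers (ρ σ ^ d)).Normal := normal_zpowers_of_mem_center (pow_mem hρσc d)
  have hord : orderOf (ρ σ : N ⧸ zpowers (ρ σ ^ d)) = d := orderOf_mk_zpowers_pow hρσ d
  obtain ⟨H, hH⟩ := Group.exists_finiteIndexNormalSubgroup_orderOf_mk_eq
    (orderOf_pos_iff.mp (hord ▸ hd))
  let q : G →* (N ⧸ zpowers (ρ σ ^ d)) ⧸ H.toSubgroup :=
    (QuotientGroup.mk' _).comp ((QuotientGroup.mk' _).comp ρ)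
  have hq : Function.Surjective q :=
    (QuotientGroup.mk'_surjective _).comp ((QuotientGroup.mk'_surjective _).comp hρ)
  let e : Shrink.{0} ((N ⧸ zpowers (ρ σ ^ d)) ⧸ H.toSubgroup) ≃* _ := Shrink.mulEquiv
  have hqσ : orderOf (e.symm.toMonoidHom.comp q σ) = d :=
    (orderOf_injective e.symm.toMonoidHom e.symm.injective (q σ)).trans (hH.trans hord)
  refine ⟨_, inferInstance, inferInstance, e.symm.toMonoidHom.comp q, e.symm.surjective.comp hq,
    ?_, hqσ⟩
  rw [map_pow, ← orderOf_dvd_iff_pow_eq_one, hqσ]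

/-- Let `G` be a finitely generated group with a central element `σ` of infinite
order (so `⟨σ⟩ ≅ ℤ`).  If `G` admits a surjection `ρ` onto a finitely generated
nilpotent group `N` with `ρ(σ)` of infinite order, then for every `d ≥ 1` the
quotient `G/⟨σ^d⟩` admits a finite quotient in which the image of `σ` has order
exactly `d`; equivalently, `G` has a finite quotient `F_d` that kills `σ^d` and
in which the image of `σ` has order exactly `d`. -/
theorem exists_finite_quotient_with_order_d (G N : Type*) [Group G] [Group N]
    [Group.FG G] [Group.FG N] [Group.IsNilpotent N]
    (σ : G) (hσ : σ ∈ Subgroup.center G) (hσinf : ¬ IsOfFinOrder σ)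
    (ρ : G →* N) (hρ : Function.Surjective ρ) (hρσ : ¬ IsOfFinOrder (ρ σ)) :
    ∀ d : ℕ, 1 ≤ d → ∃ (F : Type) (_ : Group F) (_ : Finite F) (q : G →* F),
      Function.Surjective q ∧ q (σ ^ d) = 1 ∧ orderOf (q σ) = d :=
  exists_finite_quotient_with_order_d_general G N σ hσ ρ hρ hρσ
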